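/- arXiv:2605.12793 — 5 statements merged into one kernel-verified Lean document; each statement's English description precedes it below -/
import Mathlib

section
/- Let k ≥ 2 and p_1, …, p_k ≥ 2 be integers. Every element g of the presented group G(p_1,…,p_k) can be written as g = Δ^m · v̄ for some integer m and some finite list v over Fin k such that for no index i is the list consisting of p_i consecutive copies of i a contiguous sublist (infix) of v, where v̄ denotes the ordered product of the positive generators a_{v(0)}·a_{v(1)}⋯a_{v(len−1)}. -/
/-!
Since every generator satisfies `a i ^ p i = Δ`, the element `Δ` is central in the subgroup the
generators span, and `(a i)⁻¹ = a i ^ (p i - 1) * Δ⁻¹`. Hence the elements `Δ ^ m * v̄` are stable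
under right multiplication by generators and their inverses: appending a letter `i` either keeps
`v` free of runs of `p i` copies of `i`, or completes such a run at the end, which is then traded
for one more factor `Δ` moved to the front.
-/

/-- The value in a group `G` of a word over `k` designated generators: a word of
length `n` is a function `w : Fin n → Fin k × Bool`, and its value is the ordered
product of `g (w j).1` (if the Bool is `true`) or its inverse (if `false`). -/
def wordValue {G : Type*} [Group G] {k : ℕ} (g : Fin k → G) {n : ℕ}
    (w : Fin n → Fin k × Bool) : G :=
  ((List.finRange n).map (fun j => if (w j).2 then g (w j).1 else (g (w j).1)⁻¹)).prod

/-- The number of words of length `n` whose value is the identity (cogrowth count). -/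
noncomputable def cogrowthCount {G : Type*} [Group G] {k : ℕ} (g : Fin k → G) (n : ℕ) : ℕ :=
  Nat.card {w : Fin n → Fin k × Bool // wordValue g w = 1}

/-- The distinguished index `0` in `Fin k` when `2 ≤ k`. -/
def fin0 {k : ℕ} (hk : 2 ≤ k) : Fin k := ⟨0, Nat.lt_of_lt_of_le Nat.zero_lt_two hk⟩

/-- Relators `a_i ^ (p i) * (a_{i₀} ^ (p i₀))⁻¹` for the presented group
`⟨a_1, …, a_k ∣ a_1^{p_1} = ⋯ = a_k^{p_k}⟩` (with distinguished index `i₀`). -/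
def Grels {k : ℕ} (p : Fin k → ℕ) (i₀ : Fin k) : Set (FreeGroup (Fin k)) :=
  { r | ∃ i : Fin k, r = FreeGroup.of i ^ (p i) * (FreeGroup.of i₀ ^ (p i₀))⁻¹ }

section RunFree

variable {α : Type*} {p : α → ℕ}

def RunFree (p : α → ℕ) (v : List α) : Prop :=
  ∀ i, ¬ List.replicate (p i) i <:+: v

theorem runFree_nil (hp : ∀ i, 0 < p i) : RunFree p [] := fun i h => by
  simpa [(hp i).ne'] using List.eq_nil_of_infix_nil h

theorem RunFree.of_prefix {u v : List α} (hv : RunFree p v) (huv : u <+: v) : RunFree p u :=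
  fun i hi => hv i (hi.trans huv.isInfix)

theorem RunFree.append_singleton_or (hp : ∀ i, 0 < p i) {v : List α} (hv : RunFree p v) (i : α) :
    RunFree p (v ++ [i]) ∨ ∃ u, RunFree p u ∧ v = u ++ List.replicate (p i - 1) i := by
  by_cases h : RunFree p (v ++ [i])
  · exact Or.inl h
  obtain ⟨j, hj⟩ := not_forall_not.mp h
  rcases List.infix_concat_iff.mp hj with hsuffix | hinfix
  · obtain ⟨u, hu⟩ := List.suffix_iff_exists_eq_append.mp hsuffix
    rw [← Nat.sub_one_add_one (hp j).ne', List.replicate_succ', ← List.append_assoc] at hu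
    obtain ⟨rfl, hij⟩ := List.append_inj' hu rfl
    obtain rfl : i = j := by simpa using hij
    exact Or.inr ⟨u, hv.of_prefix ⟨_, rfl⟩, rfl⟩
  · exact absurd hinfix (hv j)

end RunFree

section DeltaNormalForm

variable {G ι : Type*} [Group G] {p : ι → ℕ} {a : ι → G} {Δ : G}

def HasDeltaNormalForm (p : ι → ℕ) (a : ι → G) (Δ g : G) : Prop :=
  ∃ (m : ℤ) (v : List ι), RunFree p v ∧ g = Δ ^ m * (v.map a).prod

theorem commute_delta_prod (ha : ∀ i, a i ^ p i = Δ) (v : List ι) :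
    Commute Δ (v.map a).prod :=
  Commute.list_prod_right _ _ <| by
    simp only [List.mem_map]
    rintro _ ⟨i, -, rfl⟩
    exact ha i ▸ (Commute.refl (a i)).pow_left (p i)

namespace HasDeltaNormalForm

variable {g : G}

theorem one (hp : ∀ i, 0 < p i) : HasDeltaNormalForm p a Δ 1 :=
  ⟨0, [], runFree_nil hp, by simp⟩

theorem mul_of (hp : ∀ i, 0 < p i) (ha : ∀ i, a i ^ p i = Δ)
    (hg : HasDeltaNormalForm p a Δ g) (i : ι) : HasDeltaNormalForm p a Δ (g * a i) := by
  obtain ⟨m, v, hv, rfl⟩ := hg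
  rcases hv.append_singleton_or hp i with hvi | ⟨u, hu, rfl⟩
  · exact ⟨m, v ++ [i], hvi, by simp [mul_assoc]⟩
  · refine ⟨m + 1, u, hu, ?_⟩
    calc Δ ^ m * ((u ++ List.replicate (p i - 1) i).map a).prod * a i
        = Δ ^ m * ((u.map a).prod * (a i ^ (p i - 1) * a i)) := by
          simp [List.prod_replicate, mul_assoc]
      _ = Δ ^ m * (Δ * (u.map a).prod) := by
          rw [pow_sub_one_mul (hp i).ne', ha i, (commute_delta_prod ha u).eq]
      _ = Δ ^ (m + 1) * (u.map a).prod := by rw [zpow_add_one, mul_assoc]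

theorem mul_pow_of (hp : ∀ i, 0 < p i) (ha : ∀ i, a i ^ p i = Δ)
    (hg : HasDeltaNormalForm p a Δ g) (i : ι) (n : ℕ) :
    HasDeltaNormalForm p a Δ (g * a i ^ n) := by
  induction n with
  | zero => simpa using hg
  | succ n ih => simpa [pow_succ, mul_assoc] using ih.mul_of hp ha i

theorem mul_inv_delta (ha : ∀ i, a i ^ p i = Δ) (hg : HasDeltaNormalForm p a Δ g) :
    HasDeltaNormalForm p a Δ (g * Δ⁻¹) := by
  obtain ⟨m, v, hv, rfl⟩ := hg
  refine ⟨m - 1, v, hv, ?_⟩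
  rw [mul_assoc, ← (commute_delta_prod ha v).inv_left.eq, ← mul_assoc, zpow_sub_one]

theorem mul_inv_of (hp : ∀ i, 0 < p i) (ha : ∀ i, a i ^ p i = Δ)
    (hg : HasDeltaNormalForm p a Δ g) (i : ι) : HasDeltaNormalForm p a Δ (g * (a i)⁻¹) := by
  have hinv : (a i)⁻¹ = a i ^ (p i - 1) * Δ⁻¹ := by
    rw [← ha i, ← mul_pow_sub_one (hp i).ne', mul_inv_rev, mul_inv_cancel_left]
  rw [hinv, ← mul_assoc]
  exact (hg.mul_pow_of hp ha i _).mul_inv_delta ha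

end HasDeltaNormalForm

theorem hasDeltaNormalForm_of_mem_closure (hp : ∀ i, 0 < p i) (ha : ∀ i, a i ^ p i = Δ) {g : G}
    (hg : g ∈ Subgroup.closure (Set.range a)) : HasDeltaNormalForm p a Δ g := by
  induction hg using Subgroup.closure_induction_right with
  | one => exact .one hp
  | mul_right _ _ _ hy ih => obtain ⟨i, rfl⟩ := hy; exact ih.mul_of hp ha i
  | mul_inv_cancel _ _ _ hy ih => obtain ⟨i, rfl⟩ := hy; exact ih.mul_inv_of hp ha i

end DeltaNormalForm

theorem presentedGroup_of_pow_eq {k : ℕ} (p : Fin k → ℕ) (i₀ i : Fin k) :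
    (PresentedGroup.of i : PresentedGroup (Grels p i₀)) ^ p i = PresentedGroup.of i₀ ^ p i₀ := by
  have h := PresentedGroup.mk_eq_mk_of_mul_inv_mem (rels := Grels p i₀) ⟨i, rfl⟩
  rwa [map_pow, map_pow] at h

/-- Normal form: every element of `G(p_1,…,p_k)` is `Δ^m * v̄` for some integer `m`
and a list `v` over `Fin k` containing no contiguous run of `p i` copies of `i`,
where `v̄` is the ordered product of the positive generators indexed by `v`. -/
theorem normal_form (k : ℕ) (hk : 2 ≤ k) (p : Fin k → ℕ) (hp : ∀ i, 2 ≤ p i)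
    (g : PresentedGroup (Grels p (fin0 hk))) :
    ∃ (m : ℤ) (v : List (Fin k)),
      (∀ i : Fin k, ¬ (List.replicate (p i) i <:+: v)) ∧
      g = ((PresentedGroup.of (fin0 hk) : PresentedGroup (Grels p (fin0 hk)))
              ^ (p (fin0 hk))) ^ m *
          (v.map (fun i => (PresentedGroup.of i : PresentedGroup (Grels p (fin0 hk))))).prod :=
  hasDeltaNormalForm_of_mem_closure (fun i => zero_lt_two.trans_le (hp i))
    (presentedGroup_of_pow_eq p (fin0 hk)) (by simp)
end

section
/- Let k ≥ 2 and n ≥ 1 be integers. Then n times the number of positive words of length 2n over Fin k whose value in H_k is the identity equals k · Σ_{m=0}^{n−1} (n−m) · binom(2n, m) · (k−1)^m. (This counts closed walks of length 2n based at a vertex of the k-regular tree.) -/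
/-- The value in a group `G` of a positive word `w : Fin n → Fin k`:
the ordered product `g (w 0) * g (w 1) * ⋯ * g (w (n-1))`. -/
def posWordValue {G : Type*} [Group G] {k : ℕ} (g : Fin k → G) {n : ℕ}
    (w : Fin n → Fin k) : G :=
  ((List.finRange n).map (fun j => g (w j))).prod

/-- Relators `a_i ^ 2` for the group `H_k = ℤ/2 * ⋯ * ℤ/2` (k factors),
whose Cayley graph is the k-regular tree. -/
def Hrels (k : ℕ) : Set (FreeGroup (Fin k)) :=
  { r | ∃ i : Fin k, r = FreeGroup.of i ^ 2 }

/-!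
Reduced words over `Fin k` (no two equal adjacent letters) are the vertices of the `k`-regular
tree, on which `a_i` acts by cancelling or prepending the letter `i`; a word has value `1` in `H_k`
exactly when it reduces to the empty word. Since each `a_i` acts as an involution, the number
`f(N, d)` of words of length `N` reducing to a fixed reduced word of length `d` obeys the walk
recurrence `f(N+1, 0) = k f(N, 1)`, `f(N+1, d+1) = f(N, d) + (k-1) f(N, d+2)`. With `t = k - 1`,
its solution is the ballot-type sum `f(d + 2s, d) = Σ_{m ≤ s} (C(d+2s, m) - C(d+2s, m-1)) t^m`.
Finally `f(2n, 0) = k f(2n-1, 1)` and `n (C(2n-1, m) - C(2n-1, m-1)) = (n-m) C(2n, m)`.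
-/

open Finset Function

theorem card_foldr_ofFn_succ_of_involutive {ι X : Type*} [Fintype ι] {f : ι → X → X}
    (hf : ∀ i, Involutive (f i)) (x u : X) (N : ℕ) :
    Nat.card {w : Fin (N + 1) → ι // (List.ofFn w).foldr f x = u}
      = ∑ i, Nat.card {w : Fin N → ι // (List.ofFn w).foldr f x = f i u} := by
  let e : {w : Fin (N + 1) → ι // (List.ofFn w).foldr f x = u}
      ≃ Σ i, {w : Fin N → ι // (List.ofFn w).foldr f x = f i u} :=
    ((Fin.consEquiv fun _ => ι).symm.subtypeEquiv fun w => by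
        rw [List.ofFn_succ, List.foldr_cons, (hf _).eq_iff]; rfl).trans
      (Equiv.subtypeProdEquivSigmaSubtype fun i w => (List.ofFn w).foldr f x = f i u)
  rw [Nat.card_congr e, Nat.card_sigma]

theorem presentedGroup_Hrels_of_mul_self {k : ℕ} (i : Fin k) :
    (PresentedGroup.of i : PresentedGroup (Hrels k)) * PresentedGroup.of i = 1 := by
  rw [← sq]
  exact PresentedGroup.one_of_mem ⟨i, rfl⟩

abbrev ReducedWord (k : ℕ) := {l : List (Fin k) // l.IsChain (· ≠ ·)}

namespace ReducedWord

variable {k : ℕ}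

def nil : ReducedWord k := ⟨[], .nil⟩

def mulGen (i : Fin k) : ReducedWord k → ReducedWord k
  | ⟨[], _⟩ => ⟨[i], .singleton i⟩
  | ⟨j :: l, h⟩ => if hij : i = j then ⟨l, h.tail⟩ else ⟨i :: j :: l, h.cons_cons hij⟩

theorem mulGen_involutive (i : Fin k) : Involutive (mulGen i) := by
  rintro ⟨_ | ⟨j, l⟩, h⟩
  · simp [mulGen]
  · by_cases hij : i = j
    · subst hij
      match l, h with
      | [], _ => simp [mulGen]
      | j' :: l', h => simp [mulGen, (List.isChain_cons_cons.1 h).1]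
    · simp [mulGen, hij]

theorem length_mulGen_cons (i j : Fin k) (l : List (Fin k)) (h : (j :: l).IsChain (· ≠ ·)) :
    (mulGen i ⟨j :: l, h⟩).1.length = if i = j then l.length else l.length + 2 := by
  by_cases hij : i = j <;> simp [mulGen, hij]

def reduce (l : List (Fin k)) : ReducedWord k := l.foldr mulGen nil

theorem lift_mulGen_eq_one_of_mem_Hrels :
    ∀ r ∈ Hrels k, FreeGroup.lift (fun i => (mulGen_involutive i).toPerm) r = 1 := by
  rintro r ⟨i, rfl⟩
  ext u
  simp [sq, mulGen_involutive i u]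

def action : PresentedGroup (Hrels k) →* Equiv.Perm (ReducedWord k) :=
  PresentedGroup.toGroup lift_mulGen_eq_one_of_mem_Hrels

theorem action_prod (l : List (Fin k)) (u : ReducedWord k) :
    action (l.map PresentedGroup.of).prod u = l.foldr mulGen u := by
  induction l with
  | nil => rfl
  | cons i l ih =>
    rw [List.map_cons, List.prod_cons, map_mul, Equiv.Perm.mul_apply, ih,
      action, PresentedGroup.toGroup.of]
    rfl

theorem prod_mulGen (i : Fin k) (u : ReducedWord k) :
    ((mulGen i u).1.map PresentedGroup.of).prod
      = (PresentedGroup.of i : PresentedGroup (Hrels k)) * (u.1.map PresentedGroup.of).prod := by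
  obtain ⟨_ | ⟨j, l⟩, h⟩ := u
  · simp [mulGen]
  · by_cases hij : i = j
    · subst hij
      simp [mulGen, ← mul_assoc, presentedGroup_Hrels_of_mul_self]
    · simp [mulGen, hij]

theorem prod_reduce (l : List (Fin k)) :
    ((reduce l).1.map PresentedGroup.of).prod
      = (l.map (PresentedGroup.of (rels := Hrels k))).prod := by
  induction l with
  | nil => rfl
  | cons i l ih => rw [reduce, List.foldr_cons, prod_mulGen, ← reduce, ih, List.map_cons,
      List.prod_cons]

theorem posWordValue_eq_one_iff {n : ℕ} (w : Fin n → Fin k) :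
    posWordValue (fun i => (PresentedGroup.of i : PresentedGroup (Hrels k))) w = 1
      ↔ reduce (List.ofFn w) = nil := by
  have h_value : posWordValue (fun i => (PresentedGroup.of i : PresentedGroup (Hrels k))) w
      = ((List.ofFn w).map PresentedGroup.of).prod := by
    rw [posWordValue, List.ofFn_eq_map, List.map_map]; rfl
  rw [h_value]
  constructor
  · intro h
    have h_action := action_prod (List.ofFn w) nil
    rw [h, map_one, Equiv.Perm.one_apply] at h_action
    exact h_action.symm
  · intro h
    rw [← prod_reduce, h]
    rfl

end ReducedWord

/-- The number of walks of length `N` in the `k`-regular tree from a vertex at distance `d` to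
the root. -/
def walkCount (k : ℕ) : ℕ → ℕ → ℕ
  | 0, d => if d = 0 then 1 else 0
  | N + 1, 0 => k * walkCount k N 1
  | N + 1, d + 1 => walkCount k N d + (k - 1) * walkCount k N (d + 2)

theorem walkCount_eq_zero_of_lt {k N d : ℕ} (h : N < d) : walkCount k N d = 0 := by
  induction N generalizing d with
  | zero => simp [walkCount, Nat.ne_zero_of_lt h]
  | succ N ih =>
    obtain ⟨d, rfl⟩ := Nat.exists_eq_add_of_lt (Nat.zero_lt_of_lt h)
    simp [walkCount, ih (by omega : N < d), ih (by omega : N < d + 2)]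

theorem walkCount_self (k d : ℕ) : walkCount k d d = 1 := by
  induction d with
  | zero => rfl
  | succ d ih => simp [walkCount, ih, walkCount_eq_zero_of_lt]

theorem ReducedWord.sum_walkCount_length_mulGen {k : ℕ} (N : ℕ) (u : ReducedWord k) :
    ∑ i, walkCount k N (mulGen i u).1.length = walkCount k (N + 1) u.1.length := by
  obtain ⟨_ | ⟨j, l⟩, h⟩ := u
  · simp [mulGen, walkCount]
  · simp only [length_mulGen_cons, apply_ite (walkCount k N), List.length_cons, walkCount]
    rw [← Finset.add_sum_erase _ _ (mem_univ j), if_pos rfl,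
      Finset.sum_congr rfl fun i hi => if_neg (Finset.ne_of_mem_erase hi)]
    simp

theorem ReducedWord.card_reduce_eq_walkCount {k : ℕ} (N : ℕ) (u : ReducedWord k) :
    Nat.card {w : Fin N → Fin k // reduce (List.ofFn w) = u} = walkCount k N u.1.length := by
  induction N generalizing u with
  | zero => obtain ⟨_ | _, _⟩ := u <;> simp [reduce, nil, walkCount]
  | succ N ih =>
    rw [← sum_walkCount_length_mulGen, ← Finset.sum_congr rfl fun i _ => ih (mulGen i u)]
    exact card_foldr_ofFn_succ_of_involutive mulGen_involutive nil u N

def partialBinomSum {R : Type*} [CommSemiring R] (x : R) (N r : ℕ) : R :=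
  ∑ m ∈ range r, (N.choose m : R) * x ^ m

section partialBinomSum

variable {R : Type*} [CommSemiring R]

theorem partialBinomSum_succ (x : R) (N r : ℕ) :
    partialBinomSum x N (r + 1) = partialBinomSum x N r + N.choose r * x ^ r :=
  sum_range_succ _ _

theorem partialBinomSum_succ_succ (x : R) (N r : ℕ) :
    partialBinomSum x (N + 1) (r + 1)
      = partialBinomSum x N (r + 1) + x * partialBinomSum x N r := by
  simp only [partialBinomSum, sum_range_succ', Nat.choose_succ_succ, Nat.cast_add, add_mul,
    sum_add_distrib, mul_sum, Nat.choose_zero_right, mul_left_comm x, ← pow_succ']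
  ring

end partialBinomSum

theorem walkCount_eq_partialBinomSum (t d s : ℕ) :
    (walkCount (t + 1) (d + 2 * s) d : ℤ)
      = partialBinomSum (t : ℤ) (d + 2 * s) (s + 1)
        - t * partialBinomSum (t : ℤ) (d + 2 * s) s := by
  induction s generalizing d with
  | zero => simp [walkCount_self, partialBinomSum]
  | succ s ih_s =>
    induction d with
    | zero =>
      have h_root := ih_s 1
      rw [show 1 + 2 * s = 2 * s + 1 by ring] at h_root
      rw [show 0 + 2 * (s + 1) = 2 * s + 1 + 1 by ring, walkCount, Nat.cast_mul, h_root]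
      have p1 := partialBinomSum_succ_succ (t : ℤ) (2 * s + 1) (s + 1)
      have p2 := partialBinomSum_succ_succ (t : ℤ) (2 * s + 1) s
      have q1 := partialBinomSum_succ (t : ℤ) (2 * s + 1) (s + 1)
      have q2 := partialBinomSum_succ (t : ℤ) (2 * s + 1) s
      -- the root step rests on the symmetry `C(2s+1, s+1) = C(2s+1, s)`
      rw [Nat.choose_symm_half] at q1
      push_cast
      linear_combination (-1 : ℤ) * p1 + t * p2 - q1 + t * q2
    | succ d ih_d =>
      have h_far := ih_s (d + 2)
      rw [show d + 2 + 2 * s = d + 2 * (s + 1) by ring] at h_far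
      have p1 := partialBinomSum_succ_succ (t : ℤ) (d + 2 * (s + 1)) (s + 1)
      have p2 := partialBinomSum_succ_succ (t : ℤ) (d + 2 * (s + 1)) s
      rw [show d + 1 + 2 * (s + 1) = d + 2 * (s + 1) + 1 by ring, walkCount, Nat.cast_add,
        Nat.cast_mul, ih_d, h_far, p1, p2]
      push_cast
      ring

theorem succ_mul_partialBinomSum_sub_mul {R : Type*} [CommRing R] (x : R) (n : ℕ) :
    (n + 1 : R) * (partialBinomSum x (2 * n + 1) (n + 1) - x * partialBinomSum x (2 * n + 1) n)
      = ∑ m ∈ range (n + 1), ((n + 1 - m : ℕ) : R) * ((2 * n + 2).choose m : R) * x ^ m := by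
  have h_coeff : ∀ m ∈ range n,
      (n + 1 : R) * ((2 * n + 1).choose (m + 1) - (2 * n + 1).choose m)
        = ((n + 1 - (m + 1) : ℕ) : R) * ((2 * n + 2).choose (m + 1) : R) := by
    intro m hm
    have hmn : m < n := mem_range.1 hm
    have h_succ := congrArg (Nat.cast : ℕ → R) (Nat.choose_succ_right_eq (2 * n + 1) m)
    rw [show n + 1 - (m + 1) = n - m by omega, Nat.choose_succ_succ' (2 * n + 1) m]
    simp only [Nat.cast_add, Nat.cast_mul, Nat.cast_sub hmn.le,
      Nat.cast_sub (by omega : m ≤ 2 * n + 1), Nat.cast_one, Nat.cast_ofNat] at h_succ ⊢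
    linear_combination h_succ
  have h_term : ∀ m ∈ range n,
      ((n + 1 - (m + 1) : ℕ) : R) * ((2 * n + 2).choose (m + 1) : R) * x ^ (m + 1)
        = (n + 1) * ((2 * n + 1).choose (m + 1) * x ^ (m + 1))
          - (n + 1) * (x * ((2 * n + 1).choose m * x ^ m)) := by
    intro m hm
    rw [← h_coeff m hm]
    ring
  rw [partialBinomSum, partialBinomSum, sum_range_succ', sum_range_succ' _ n,
    sum_congr rfl h_term, sum_sub_distrib, ← mul_sum, ← mul_sum, ← mul_sum]
  simp
  ring

theorem tree_walk_count_general (k n : ℕ) (hk : 2 ≤ k) :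
    n * Nat.card {w : Fin (2*n) → Fin k //
        posWordValue (fun i => (PresentedGroup.of i : PresentedGroup (Hrels k))) w = 1}
      = k * ∑ m ∈ Finset.range n, (n - m) * Nat.choose (2*n) m * (k-1)^m := by
  obtain ⟨t, rfl⟩ : ∃ t, k = t + 1 := ⟨k - 1, by omega⟩
  rw [Nat.card_congr (Equiv.subtypeEquivRight ReducedWord.posWordValue_eq_one_iff),
    ReducedWord.card_reduce_eq_walkCount]
  cases n with
  | zero => simp
  | succ n =>
    have h_closed := walkCount_eq_partialBinomSum t 1 n
    rw [add_comm 1] at h_closed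
    apply Nat.cast_injective (R := ℤ)
    rw [show 2 * (n + 1) = 2 * n + 1 + 1 by ring, ReducedWord.nil, List.length_nil, walkCount]
    push_cast
    rw [h_closed, mul_left_comm, succ_mul_partialBinomSum_sub_mul]

/-- `n` times the number of positive words of length `2n` over `Fin k` whose value
in `H_k` is the identity equals `k · Σ_{m=0}^{n-1} (n-m)·C(2n,m)·(k-1)^m`. -/
theorem tree_walk_count (k n : ℕ) (hk : 2 ≤ k) (hn : 1 ≤ n) :
    n * Nat.card {w : Fin (2*n) → Fin k //
        posWordValue (fun i => (PresentedGroup.of i : PresentedGroup (Hrels k))) w = 1}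
      = k * ∑ m ∈ Finset.range n, (n - m) * Nat.choose (2*n) m * (k-1)^m :=
  tree_walk_count_general k n hk
end

section
/- In the group G(2,2) = ⟨a,b ∣ a² = b²⟩, for every natural number n, the number of words of length 2n in the generators a, b and their inverses whose value is the identity equals binom(2n, n)². -/
/-- The single relator `a² · (b²)⁻¹` presenting `G(2,2) = ⟨a,b ∣ a² = b²⟩`. -/
def rels22 : Set (FreeGroup (Fin 2)) :=
  {FreeGroup.of 0 ^ 2 * (FreeGroup.of 1 ^ 2)⁻¹}

/-!
With `t = b a⁻¹`, the relation `a² = b²` becomes `a t a⁻¹ = t⁻¹`, and `t ^ x * a ^ k ↦ (x, k)`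
identifies `G(2,2)` with the Klein bottle group `ℤ ⋊ ℤ`, where
`(x, k) * (y, l) = (x + (-1)ᵏ y, k + l)`. There `a ↦ (0, 1)` and `b ↦ (1, 1)`: every letter has odd
second coordinate, so a word has value `(∑ⱼ (-1)ʲ [letter j is b^±1], ∑ⱼ ±1)`. Swapping `a` and `b`
at odd positions turns the first condition into "half of the letters are `b^±1`", the second says
"half of the exponents are `+1`"; the two are independent and each leaves `C(2n, n)` choices.
-/

open scoped Finset

theorem semiconjBy_mul_inv_of_sq_eq_sq {G : Type*} [Group G] {a b : G} (h : a ^ 2 = b ^ 2) :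
    SemiconjBy a (b * a⁻¹) (b * a⁻¹)⁻¹ :=
  calc a * (b * a⁻¹) = a * b⁻¹ * b ^ 2 * a⁻¹ := by group
    _ = a * b⁻¹ * a ^ 2 * a⁻¹ := by rw [h]
    _ = (b * a⁻¹)⁻¹ * a := by group

theorem SemiconjBy.zpow_zpow_negOnePow {G : Type*} [Group G] {a t : G}
    (h : SemiconjBy a t t⁻¹) (k m : ℤ) : SemiconjBy (a ^ k) (t ^ m) (t ^ (k.negOnePow * m)) := by
  have ha (m : ℤ) : SemiconjBy a (t ^ m) (t ^ (-m)) := by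
    simpa [inv_zpow'] using h.zpow_right m
  have ha' (m : ℤ) : SemiconjBy a⁻¹ (t ^ m) (t ^ (-m)) := by
    simpa using (ha (-m)).inv_symm_left
  induction k using Int.induction_on generalizing m with
  | zero => simp
  | succ k ih =>
    rw [zpow_add_one]
    simpa [Int.negOnePow_succ] using (ih (-m)).mul_left (ha m)
  | pred k ih =>
    rw [zpow_sub_one]
    simpa [Int.negOnePow_sub, Int.negOnePow_one] using (ih (-m)).mul_left (ha' m)

theorem map_wordValue {G H : Type*} [Group G] [Group H] (φ : G →* H) {k : ℕ} (g : Fin k → G)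
    {n : ℕ} (w : Fin n → Fin k × Bool) :
    φ (wordValue g w) = wordValue (fun i => φ (g i)) w := by
  simp only [wordValue, map_list_prod, List.map_map]
  congr 2
  ext j
  simp only [Function.comp_apply, apply_ite φ, map_inv]

theorem cogrowthCount_map_of_injective {G H : Type*} [Group G] [Group H] (φ : G →* H)
    (hφ : Function.Injective φ) {k : ℕ} (g : Fin k → G) (n : ℕ) :
    cogrowthCount (fun i => φ (g i)) n = cogrowthCount g n :=
  Nat.card_congr <| Equiv.subtypeEquivRight fun w => by
    rw [← map_wordValue, map_eq_one_iff φ hφ]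

@[ext]
structure KleinBottleGroup where
  left : ℤ
  right : ℤ

namespace KleinBottleGroup

instance : Mul KleinBottleGroup :=
  ⟨fun x y => ⟨x.left + x.right.negOnePow * y.left, x.right + y.right⟩⟩
instance : One KleinBottleGroup := ⟨⟨0, 0⟩⟩
instance : Inv KleinBottleGroup := ⟨fun x => ⟨-(x.right.negOnePow * x.left), -x.right⟩⟩

@[simp] lemma mul_left (x y : KleinBottleGroup) :
    (x * y).left = x.left + x.right.negOnePow * y.left := rfl
@[simp] lemma mul_right (x y : KleinBottleGroup) : (x * y).right = x.right + y.right := rfl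
@[simp] lemma one_left : (1 : KleinBottleGroup).left = 0 := rfl
@[simp] lemma one_right : (1 : KleinBottleGroup).right = 0 := rfl
@[simp] lemma inv_left (x : KleinBottleGroup) : x⁻¹.left = -(x.right.negOnePow * x.left) := rfl
@[simp] lemma inv_right (x : KleinBottleGroup) : x⁻¹.right = -x.right := rfl

instance : Group KleinBottleGroup where
  mul_assoc x y z := by ext <;> simp [Int.negOnePow_add] <;> ring
  one_mul x := by ext <;> simp
  mul_one x := by ext <;> simp
  inv_mul_cancel x := by ext <;> simp [Int.negOnePow_neg]

theorem prod_finRange_map_of_odd {m : ℕ} (f : Fin m → KleinBottleGroup)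
    (hf : ∀ j, Odd (f j).right) :
    ((List.finRange m).map f).prod =
      ⟨∑ j : Fin m, (-1 : ℤ) ^ (j : ℕ) * (f j).left, ∑ j, (f j).right⟩ := by
  induction m with
  | zero => rfl
  | succ m ih =>
    rw [List.finRange_succ, List.map_cons, List.map_map, List.prod_cons,
      ih (f ∘ Fin.succ) fun j => hf j.succ]
    ext
    · simp [Fin.sum_univ_succ, Int.negOnePow_odd _ (hf 0), pow_succ, Finset.mul_sum]
    · simp [Fin.sum_univ_succ]

def lift {G : Type*} [Group G] {a t : G} (h : SemiconjBy a t t⁻¹) : KleinBottleGroup →* G where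
  toFun x := t ^ x.left * a ^ x.right
  map_one' := by simp
  map_mul' x y := by
    simp only [mul_left, mul_right, zpow_add, mul_assoc]
    rw [← mul_assoc (a ^ x.right), (h.zpow_zpow_negOnePow _ _).eq, mul_assoc]

def gen (i : Fin 2) : KleinBottleGroup := ⟨i, 1⟩

lemma gen_sq (i : Fin 2) : gen i ^ 2 = ⟨0, 2⟩ := by
  ext <;> simp [gen, sq, Int.negOnePow_one]

end KleinBottleGroup

namespace G22

open KleinBottleGroup

abbrev a : PresentedGroup rels22 := .of 0
abbrev b : PresentedGroup rels22 := .of 1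

lemma a_sq_eq_b_sq : a ^ 2 = b ^ 2 := by
  have h := PresentedGroup.mk_eq_mk_of_mul_inv_mem (rels := rels22)
    (x := FreeGroup.of 0 ^ 2) (y := FreeGroup.of 1 ^ 2) (Set.mem_singleton _)
  rwa [map_pow, map_pow] at h

noncomputable def toKleinBottleGroup : PresentedGroup rels22 →* KleinBottleGroup :=
  PresentedGroup.toGroup (f := gen) <| by
    rintro _ rfl
    simp [gen_sq]

noncomputable def ofKleinBottleGroup : KleinBottleGroup →* PresentedGroup rels22 :=
  lift (semiconjBy_mul_inv_of_sq_eq_sq a_sq_eq_b_sq)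

lemma ofKleinBottleGroup_comp_toKleinBottleGroup :
    ofKleinBottleGroup.comp toKleinBottleGroup = MonoidHom.id _ :=
  PresentedGroup.ext fun i => by
    fin_cases i <;> simp [toKleinBottleGroup, ofKleinBottleGroup, lift, gen]

lemma toKleinBottleGroup_injective : Function.Injective toKleinBottleGroup :=
  Function.LeftInverse.injective (g := ofKleinBottleGroup)
    (DFunLike.congr_fun ofKleinBottleGroup_comp_toKleinBottleGroup)

end G22

def boolSign (b : Bool) : ℤ := if b then 1 else -1

lemma odd_boolSign (b : Bool) : Odd (boolSign b) := by
  cases b <;> decide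

lemma sum_boolSign {m : ℕ} (g : Fin m → Bool) : ∑ j, boolSign (g j) = 2 * #{j | g j} - m := by
  have h (j : Fin m) : boolSign (g j) = 2 * (if g j then 1 else 0) - 1 := by
    cases g j <;> rfl
  rw [Finset.sum_congr rfl fun j _ => h j, Finset.sum_sub_distrib, ← Finset.mul_sum,
    Finset.sum_boole]
  simp

theorem card_fun_bool_card_filter (m k : ℕ) :
    Nat.card {g : Fin m → Bool // #{j | g j} = k} = m.choose k := by
  let e : (Fin m → Bool) ≃ Finset (Fin m) :=
    { toFun g := {j | g j}
      invFun s j := j ∈ s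
      left_inv g := by ext; simp
      right_inv s := by ext; simp }
  rw [Nat.card_congr (e.subtypeEquiv (p := fun g => #{j | g j} = k) (q := fun s => #s = k)
    fun _ => Iff.rfl), Nat.card_eq_fintype_card,
    Fintype.card_finset_len, Fintype.card_fin]

theorem card_sum_boolSign_eq_zero (n : ℕ) :
    Nat.card {g : Fin (2 * n) → Bool // ∑ j, boolSign (g j) = 0} = (2 * n).choose n := by
  rw [← card_fun_bool_card_filter]
  refine Nat.card_congr (Equiv.subtypeEquivRight fun g => ?_)
  rw [sum_boolSign]
  omega

def flipOdd {m : ℕ} : (Fin m → Fin 2) ≃ (Fin m → Bool) where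
  toFun c j := xor (finTwoEquiv (c j)) (decide (Odd (j : ℕ)))
  invFun g j := finTwoEquiv.symm (xor (g j) (decide (Odd (j : ℕ))))
  left_inv c := by ext j; simp
  right_inv g := by ext j; simp

lemma flipOdd_apply {m : ℕ} (c : Fin m → Fin 2) (j : Fin m) :
    flipOdd c j = xor (finTwoEquiv (c j)) (decide (Odd (j : ℕ))) := rfl

lemma sum_neg_one_pow_fin_two_mul (n : ℕ) : ∑ j : Fin (2 * n), (-1 : ℤ) ^ (j : ℕ) = 0 := by
  rw [Fin.sum_univ_eq_sum_range (fun j => (-1 : ℤ) ^ j), neg_one_geom_sum, if_pos (even_two_mul n)]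

lemma two_mul_alternating_sum {n : ℕ} (c : Fin (2 * n) → Fin 2) :
    2 * ∑ j : Fin (2 * n), (-1 : ℤ) ^ (j : ℕ) * (c j : ℤ) = ∑ j, boolSign (flipOdd c j) := by
  have h (j : Fin (2 * n)) :
      2 * ((-1 : ℤ) ^ (j : ℕ) * (c j : ℤ)) = boolSign (flipOdd c j) + (-1) ^ (j : ℕ) := by
    rw [flipOdd_apply]
    generalize c j = i
    rcases Nat.even_or_odd j with hj | hj <;> fin_cases i <;>
      simp [finTwoEquiv, boolSign, hj, hj.neg_one_pow, Nat.not_odd_iff_even.mpr]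
  simp [Finset.mul_sum, h, Finset.sum_add_distrib, sum_neg_one_pow_fin_two_mul]

namespace KleinBottleGroup

lemma ite_gen_gen_inv (i : Fin 2) (s : Bool) :
    (if s then gen i else (gen i)⁻¹) = ⟨i, boolSign s⟩ := by
  cases s <;> ext <;> simp [gen, boolSign, Int.negOnePow_one]

theorem wordValue_gen {m : ℕ} (w : Fin m → Fin 2 × Bool) :
    wordValue gen w =
      ⟨∑ j : Fin m, (-1 : ℤ) ^ (j : ℕ) * ((w j).1 : ℤ), ∑ j, boolSign (w j).2⟩ := by
  simp only [wordValue, ite_gen_gen_inv]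
  exact prod_finRange_map_of_odd _ fun j => odd_boolSign (w j).2

theorem wordValue_gen_eq_one_iff {n : ℕ} (w : Fin (2 * n) → Fin 2 × Bool) :
    wordValue gen w = 1 ↔
      ∑ j, boolSign (flipOdd (fun j => (w j).1) j) = 0 ∧ ∑ j, boolSign (w j).2 = 0 := by
  rw [wordValue_gen, ← two_mul_alternating_sum, KleinBottleGroup.ext_iff]
  simp

theorem cogrowthCount_gen (n : ℕ) : cogrowthCount gen (2 * n) = (2 * n).choose n ^ 2 := by
  let e : (Fin (2 * n) → Fin 2 × Bool) ≃ (Fin (2 * n) → Bool) × (Fin (2 * n) → Bool) :=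
    (Equiv.arrowProdEquivProdArrow _ _ _).trans (Equiv.prodCongr flipOdd (Equiv.refl _))
  calc cogrowthCount gen (2 * n)
      = Nat.card {p : (Fin (2 * n) → Bool) × (Fin (2 * n) → Bool) //
          ∑ j, boolSign (p.1 j) = 0 ∧ ∑ j, boolSign (p.2 j) = 0} :=
        Nat.card_congr (e.subtypeEquiv wordValue_gen_eq_one_iff)
    _ = (2 * n).choose n ^ 2 := by
        rw [Nat.card_congr (Equiv.subtypeProdEquivProd
            (p := fun g : Fin (2 * n) → Bool => ∑ j, boolSign (g j) = 0)
            (q := fun g : Fin (2 * n) → Bool => ∑ j, boolSign (g j) = 0)),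
          Nat.card_prod, card_sum_boolSign_eq_zero, sq]

end KleinBottleGroup

/-- In `G(2,2) = ⟨a,b ∣ a² = b²⟩`, the number of words of length `2n` in the
generators and their inverses whose value is the identity equals `C(2n,n)²`. -/
theorem cogrowth_G22 (n : ℕ) :
    cogrowthCount (fun i => (PresentedGroup.of i : PresentedGroup rels22)) (2*n)
      = (Nat.choose (2*n) n)^2 := by
  rw [← cogrowthCount_map_of_injective _ G22.toKleinBottleGroup_injective]
  exact KleinBottleGroup.cogrowthCount_gen n
end

section
/- Let k ≥ 3 be an integer and let G = G(2,…,2) = ⟨a_1,…,a_k ∣ a_1² = ⋯ = a_k²⟩ with cogrowth counts ψ. Then for every integer n ≥ 1, n · ψ(2n) = k · binom(2n, n) · Σ_{m=0}^{n−1} (n−m) · binom(2n, m) · (k−1)^m. -/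
/-!
Let `z = a₁²`. It is central, and `G ⧸ ⟨z⟩` is the free product of `k` copies of `ℤ/2`, whose
elements are the words in the `aᵢ` with no two equal adjacent letters. Sending every `aᵢ` to `1`
gives a homomorphism `G → ℤ`, and `z` has degree `2`. A word `w` with letters `aᵢ^{±1}` is
therefore trivial iff (a) its sequence of indices cancels down to the empty word in the free
product, and (b) it has as many positive as negative letters: (a) and (b) force `w = z^e` with
`2e = 0`. The two conditions are independent: (b) is met by `C(2n, n)` choices of signs, and the
index sequences satisfying (a) are the closed walks of length `2n` at the root of the `k`-regular
tree. Those are counted by the recursion on the distance to the root, which is solved by partial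
sums of `C(2n, m) (k-1)^m`; a binomial identity turns the result into the stated formula.
-/

open Finset

namespace Cogrowth

section Reduction

variable {α : Type*} [DecidableEq α]

def push (i : α) : List α → List α
  | [] => [i]
  | j :: t => if j = i then t else i :: j :: t

def reduce : List α → List α := List.foldr push []

abbrev IsReduced (l : List α) : Prop := l.IsChain (· ≠ ·)

@[simp] lemma push_cons_self (i : α) (t : List α) : push i (i :: t) = t := if_pos rfl

lemma push_cons_of_ne {i j : α} (t : List α) (h : j ≠ i) : push i (j :: t) = i :: j :: t :=
  if_neg h

@[simp] lemma reduce_nil : reduce ([] : List α) = [] := rfl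

@[simp] lemma reduce_cons (i : α) (l : List α) : reduce (i :: l) = push i (reduce l) := rfl

lemma IsReduced.push {l : List α} (hl : IsReduced l) (i : α) : IsReduced (push i l) := by
  cases l with
  | nil => exact List.isChain_singleton i
  | cons j t =>
    by_cases hj : j = i
    · simpa [hj] using hl.tail
    · simpa [push_cons_of_ne t hj] using List.isChain_cons_cons.mpr ⟨Ne.symm hj, hl⟩

lemma push_push {l : List α} (hl : IsReduced l) (i : α) : push i (push i l) = l := by
  match l, hl with
  | [], _ => simp [push]
  | [j], _ => by_cases hj : j = i <;> simp [push, hj]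
  | j :: j' :: t, hl =>
    have hjj' : j ≠ j' := (List.isChain_cons_cons.mp hl).1
    by_cases hj : j = i
    · subst hj; simp [push, Ne.symm hjj']
    · simp [push, hj]

lemma isReduced_reduce (l : List α) : IsReduced (reduce l) := by
  induction l with
  | nil => exact List.isChain_nil
  | cons i l ih => exact ih.push i

lemma push_eq_nil_iff {i : α} {l : List α} : push i l = [] ↔ l = [i] := by
  cases l with
  | nil => simp [push]
  | cons j t => by_cases hj : j = i <;> simp [push, hj]

lemma push_eq_cons_self_iff {i : α} {l t : List α} (hl : IsReduced l)
    (ht : IsReduced (i :: t)) : push i l = i :: t ↔ l = t := by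
  constructor
  · intro h
    simpa [push_push hl] using congrArg (push i) h
  · rintro rfl
    cases l with
    | nil => rfl
    | cons j t => exact push_cons_of_ne _ (List.isChain_cons_cons.mp ht).1.symm

lemma push_eq_cons_of_ne {i j : α} {l t : List α} (hij : i ≠ j) :
    push i l = j :: t ↔ l = i :: j :: t := by
  cases l with
  | nil => simp [push, hij]
  | cons x t' => by_cases hx : x = i <;> simp [push, hx, hij]

end Reduction

/-- `treeWalks d N h` counts the walks of length `N` in the `d`-regular tree that start at
distance `h` from a fixed root and end at the root. -/
def treeWalks (d : ℕ) : ℕ → ℕ → ℕ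
  | 0, 0 => 1
  | 0, _ + 1 => 0
  | N + 1, 0 => d * treeWalks d N 1
  | N + 1, h + 1 => treeWalks d N h + (d - 1) * treeWalks d N (h + 2)

lemma sum_ite_eq_add_mul {α : Type*} [Fintype α] [DecidableEq α] (j : α) (x y : ℕ) :
    ∑ i : α, (if i = j then x else y) = x + (Fintype.card α - 1) * y := by
  rw [← add_sum_erase _ _ (mem_univ j), if_pos rfl,
    sum_congr rfl fun i hi => if_neg (ne_of_mem_erase hi), sum_const,
    card_erase_of_mem (mem_univ j), card_univ, smul_eq_mul]

theorem card_reduce_ofFn_eq {α : Type*} [Fintype α] [DecidableEq α] (N : ℕ) {s : List α}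
    (hs : IsReduced s) :
    Fintype.card {u : Fin N → α // reduce (List.ofFn u) = s}
      = treeWalks (Fintype.card α) N s.length := by
  induction N generalizing s with
  | zero =>
    rcases s with _ | ⟨j, t⟩
    · simp [treeWalks, Fintype.card_subtype]
    · simp [treeWalks]
  | succ N ih =>
    let e : {v : Fin (N + 1) → α // reduce (List.ofFn v) = s} ≃
        Σ i : α, {u : Fin N → α // push i (reduce (List.ofFn u)) = s} :=
      (Equiv.subtypeEquiv (Fin.consEquiv fun _ => α).symm fun v => by
          rw [List.ofFn_succ]; rfl).trans
        (Equiv.subtypeProdEquivSigmaSubtype fun i u => push i (reduce (List.ofFn u)) = s)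
    rw [Fintype.card_congr e, Fintype.card_sigma]
    rcases s with _ | ⟨j, t⟩
    · have hcount (i : α) :
          Fintype.card {u : Fin N → α // push i (reduce (List.ofFn u)) = []}
            = treeWalks (Fintype.card α) N 1 := by
        rw [Fintype.card_congr (Equiv.subtypeEquivRight fun u => push_eq_nil_iff)]
        exact ih (List.isChain_singleton i)
      simp_rw [hcount, sum_const, card_univ, smul_eq_mul]
      rfl
    · have hcount (i : α) :
          Fintype.card {u : Fin N → α // push i (reduce (List.ofFn u)) = j :: t}
            = if i = j then treeWalks (Fintype.card α) N t.length
              else treeWalks (Fintype.card α) N (t.length + 2) := by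
        split_ifs with hij
        · subst hij
          rw [Fintype.card_congr (Equiv.subtypeEquivRight fun u =>
            push_eq_cons_self_iff (isReduced_reduce _) hs)]
          exact ih hs.tail
        · rw [Fintype.card_congr (Equiv.subtypeEquivRight fun u => push_eq_cons_of_ne hij)]
          exact ih (List.isChain_cons_cons.mpr ⟨hij, hs⟩)
      simp_rw [hcount, sum_ite_eq_add_mul]
      rfl

lemma treeWalks_eq_zero_of_lt (d : ℕ) {N h : ℕ} (hNh : N < h) : treeWalks d N h = 0 := by
  induction N generalizing h with
  | zero => obtain ⟨h, rfl⟩ := Nat.exists_eq_add_one.mpr hNh; rfl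
  | succ N ih =>
    obtain ⟨h, rfl⟩ := Nat.exists_eq_add_one.mpr (Nat.zero_lt_of_lt hNh)
    simp only [treeWalks, ih (by omega : N < h), ih (by omega : N < h + 2), mul_zero, add_zero]

def binomPartialSum (q N j : ℕ) : ℕ := ∑ m ∈ range j, N.choose m * q ^ m

lemma binomPartialSum_succ_succ (q N j : ℕ) :
    binomPartialSum q (N + 1) (j + 1)
      = binomPartialSum q N (j + 1) + q * binomPartialSum q N j := by
  simp only [binomPartialSum, sum_range_succ' (fun m => (N + 1).choose m * q ^ m),
    sum_range_succ' (fun m => N.choose m * q ^ m), Nat.choose_succ_succ', add_mul,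
    sum_add_distrib, mul_sum, Nat.choose_zero_right]
  rw [sum_congr rfl fun m _ => show q * (N.choose m * q ^ m) = N.choose m * q ^ (m + 1) by ring]
  ring

lemma binomPartialSum_succ (q N j : ℕ) :
    binomPartialSum q N (j + 1) = binomPartialSum q N j + N.choose j * q ^ j :=
  sum_range_succ _ _

lemma treeWalks_add_mul_binomPartialSum (q : ℕ) {N h M : ℕ} (hN : N = h + 2 * M) :
    treeWalks (q + 1) N h + q * binomPartialSum q N M = binomPartialSum q N (M + 1) := by
  induction N generalizing h M with
  | zero =>
    obtain ⟨rfl, rfl⟩ : h = 0 ∧ M = 0 := by omega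
    simp [treeWalks, binomPartialSum]
  | succ N ih =>
    rcases h with _ | h
    · obtain ⟨M, rfl⟩ : ∃ M', M = M' + 1 := ⟨M - 1, by omega⟩
      have hchoose : N.choose (M + 1) = N.choose M := by
        rw [← Nat.choose_symm (by omega : M ≤ N)]; congr 1; omega
      have := ih (h := 1) (M := M) (by omega)
      simp only [treeWalks, binomPartialSum_succ_succ, binomPartialSum_succ, hchoose] at this ⊢
      linear_combination (q + 1) * this
    · rcases M with _ | M
      · have := ih (h := h) (M := 0) (by omega)
        simp only [treeWalks, treeWalks_eq_zero_of_lt _ (by omega : N < h + 2),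
          binomPartialSum_succ_succ] at this ⊢
        simpa [binomPartialSum] using this
      · have h1 := ih (h := h) (M := M + 1) (by omega)
        have h2 := ih (h := h + 2) (M := M) (by omega)
        simp only [treeWalks, add_tsub_cancel_right, binomPartialSum_succ_succ] at h1 h2 ⊢
        linear_combination h1 + q * h2

lemma sum_range_succ_mul_choose_mul_pow (q N j : ℕ) :
    ∑ m ∈ range (j + 1), m * N.choose m * q ^ m
      = ∑ m ∈ range j, (N - m) * N.choose m * q ^ (m + 1) := by
  rw [sum_range_succ', zero_mul, zero_mul, add_zero]
  refine sum_congr rfl fun m _ => ?_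
  rw [mul_comm (m + 1 : ℕ), Nat.choose_succ_right_eq, mul_comm (N - m)]

lemma mul_binomPartialSum_two_mul_succ (q n : ℕ) :
    n * binomPartialSum q (2 * n) (n + 1)
      = n * q * binomPartialSum q (2 * n) n
        + (q + 1) * ∑ m ∈ range n, (n - m) * (2 * n).choose m * q ^ m := by
  set T := ∑ m ∈ range n, (n - m) * (2 * n).choose m * q ^ m
  calc n * binomPartialSum q (2 * n) (n + 1)
      = ∑ m ∈ range (n + 1), (n - m) * (2 * n).choose m * q ^ m
        + ∑ m ∈ range (n + 1), m * (2 * n).choose m * q ^ m := by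
        rw [binomPartialSum, mul_sum, ← sum_add_distrib]
        refine sum_congr rfl fun m hm => ?_
        rw [← add_mul, ← add_mul, Nat.sub_add_cancel (Nat.lt_succ_iff.mp (mem_range.mp hm)),
          mul_assoc]
    _ = T + ∑ m ∈ range n, ((n - m) + n) * (2 * n).choose m * q ^ (m + 1) := by
        rw [sum_range_succ, Nat.sub_self, zero_mul, zero_mul, add_zero,
          sum_range_succ_mul_choose_mul_pow]
        congr 1
        refine sum_congr rfl fun m hm => ?_
        congr 2
        have := mem_range.mp hm
        omega
    _ = n * q * binomPartialSum q (2 * n) n + (q + 1) * T := by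
        simp only [add_mul, sum_add_distrib]
        rw [sum_congr rfl fun m _ => show (n - m) * (2 * n).choose m * q ^ (m + 1)
          = q * ((n - m) * (2 * n).choose m * q ^ m) by ring,
          sum_congr rfl fun m _ => show n * (2 * n).choose m * q ^ (m + 1)
          = n * q * ((2 * n).choose m * q ^ m) by ring, ← mul_sum, ← mul_sum, binomPartialSum]
        ring

def boolFunEquivFinset (α : Type*) [Fintype α] [DecidableEq α] : (α → Bool) ≃ Finset α where
  toFun b := univ.filter fun j => b j
  invFun s j := decide (j ∈ s)
  left_inv b := by ext j; simp
  right_inv s := by ext j; simp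

def boolSign (b : Bool) : ℤ := if b then 1 else -1

lemma sum_boolSign {α : Type*} [Fintype α] (b : α → Bool) :
    ∑ j, boolSign (b j) = 2 * #{j | b j} - Fintype.card α := by
  simp only [boolSign]
  rw [Finset.sum_ite, sum_const, sum_const, ← card_univ,
    ← card_filter_add_card_filter_not (s := univ) fun j => b j]
  simp only [nsmul_eq_mul, Nat.cast_add]
  ring

lemma card_sum_boolSign_eq_zero (n : ℕ) :
    Fintype.card {b : Fin (2 * n) → Bool // ∑ j, boolSign (b j) = 0} = (2 * n).choose n := by
  rw [← Fintype.card_fin (2 * n), ← Fintype.card_finset_len, Fintype.card_fin]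
  refine Fintype.card_congr (Equiv.subtypeEquiv (boolFunEquivFinset _) fun b => ?_)
  rw [sum_boolSign, Fintype.card_fin]
  simp [boolFunEquivFinset]
  omega

section Words

variable {G : Type*} [Group G] {k : ℕ}

def letterValue (g : Fin k → G) (p : Fin k × Bool) : G := if p.2 then g p.1 else (g p.1)⁻¹

lemma wordValue_eq_prod (g : Fin k → G) {N : ℕ} (w : Fin N → Fin k × Bool) :
    wordValue g w = ((List.ofFn w).map (letterValue g)).prod := by
  rw [wordValue, List.ofFn_eq_map, List.map_map]
  rfl

lemma map_letterValue {H : Type*} [Group H] (f : G →* H) (g : Fin k → G) (p : Fin k × Bool) :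
    f (letterValue g p) = letterValue (f ∘ g) p := by
  unfold letterValue; split_ifs <;> simp

end Words

def ReducedWord (α : Type*) := {l : List α // IsReduced l}

def pushPerm {α : Type*} [DecidableEq α] (i : α) : Equiv.Perm (ReducedWord α) :=
  Function.Involutive.toPerm (fun s => ⟨push i s.1, s.2.push i⟩) fun s =>
    Subtype.ext (push_push s.2 i)

lemma pushPerm_mul_self {α : Type*} [DecidableEq α] (i : α) : pushPerm i * pushPerm i = 1 :=
  Equiv.ext fun s => Subtype.ext (push_push s.2 i)

lemma pushPerm_inv {α : Type*} [DecidableEq α] (i : α) : (pushPerm i)⁻¹ = pushPerm i :=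
  inv_eq_of_mul_eq_one_right (pushPerm_mul_self i)

section PresentedGroup

variable {k : ℕ} (i₀ : Fin k)

lemma of_pow_eq (p : Fin k → ℕ) (i : Fin k) :
    (PresentedGroup.of i : PresentedGroup (Grels p i₀)) ^ p i = PresentedGroup.of i₀ ^ p i₀ := by
  have h := PresentedGroup.mk_eq_mk_of_mul_inv_mem (rels := Grels p i₀)
    (x := FreeGroup.of i ^ p i) (y := FreeGroup.of i₀ ^ p i₀) ⟨i, rfl⟩
  rwa [map_pow, map_pow] at h

lemma commute_of_pow (p : ℕ) (g : PresentedGroup (Grels (fun _ : Fin k => p) i₀)) :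
    Commute (PresentedGroup.of i₀ ^ p) g := by
  refine (Subgroup.mem_centralizer_singleton_iff.mp
    (PresentedGroup.generated_by _ _ (fun i => ?_) g)).symm
  rw [Subgroup.mem_centralizer_singleton_iff, ← of_pow_eq i₀ (fun _ => p) i, ← pow_succ,
    ← pow_succ']

def degreeHom (p : ℕ) : PresentedGroup (Grels (fun _ : Fin k => p) i₀) →* Multiplicative ℤ :=
  PresentedGroup.toGroup (f := fun _ => Multiplicative.ofAdd 1) (by rintro _ ⟨i, rfl⟩; simp)

@[simp] lemma degreeHom_of (p : ℕ) (i : Fin k) :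
    degreeHom i₀ p (PresentedGroup.of i) = .ofAdd 1 :=
  PresentedGroup.toGroup.of _

local notation "Γ" => PresentedGroup (Grels (fun _ : Fin k => 2) i₀)
local notation "z" => (PresentedGroup.of i₀ : Γ) ^ 2

def reductionHom : Γ →* Equiv.Perm (ReducedWord (Fin k)) :=
  PresentedGroup.toGroup (f := pushPerm) (by
    rintro _ ⟨i, rfl⟩
    simp [pow_two, pushPerm_mul_self, pushPerm_inv])

@[simp] lemma reductionHom_of (i : Fin k) : reductionHom i₀ (PresentedGroup.of i) = pushPerm i :=
  PresentedGroup.toGroup.of _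

lemma reductionHom_prod (l : List (Fin k × Bool)) (s : ReducedWord (Fin k)) :
    (reductionHom i₀ (l.map (letterValue PresentedGroup.of)).prod s).1
      = (l.map Prod.fst).foldr push s.1 := by
  induction l with
  | nil => rfl
  | cons p l ih =>
    rw [List.map_cons, List.prod_cons, map_mul, map_letterValue, Equiv.Perm.mul_apply]
    have : letterValue (reductionHom i₀ ∘ PresentedGroup.of) p = pushPerm p.1 := by
      simp [letterValue, pushPerm_inv]
    rw [this]
    exact congrArg (push p.1) ih

lemma degreeHom_prod (l : List (Fin k × Bool)) :
    degreeHom i₀ 2 (l.map (letterValue PresentedGroup.of)).prod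
      = .ofAdd (l.map fun p => boolSign p.2).sum := by
  induction l with
  | nil => rfl
  | cons p l ih =>
    rcases p with ⟨i, _ | _⟩ <;> simp [letterValue, boolSign, ih, ofAdd_add, ofAdd_neg]

lemma letterValue_eq_of_mul_zpow (p : Fin k × Bool) :
    ∃ e : ℤ, letterValue PresentedGroup.of p = (PresentedGroup.of p.1 : Γ) * z ^ e := by
  refine ⟨if p.2 then 0 else -1, ?_⟩
  unfold letterValue
  split_ifs
  · simp
  · rw [zpow_neg_one, ← of_pow_eq i₀ (fun _ => 2) p.1]; group

lemma of_mul_prod_eq_mul_zpow (i : Fin k) (s : List (Fin k)) :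
    ∃ e : ℤ, (PresentedGroup.of i : Γ) * (s.map PresentedGroup.of).prod
      = ((push i s).map PresentedGroup.of).prod * z ^ e := by
  rcases s with _ | ⟨j, t⟩
  · exact ⟨0, by simp [push]⟩
  · by_cases hj : j = i
    · subst hj
      refine ⟨1, ?_⟩
      rw [push_cons_self, List.map_cons, List.prod_cons, ← mul_assoc, ← pow_two,
        of_pow_eq i₀ (fun _ => 2), zpow_one, (commute_of_pow i₀ 2 _).eq]
    · exact ⟨0, by simp [push_cons_of_ne t hj]⟩

lemma exists_prod_eq_mul_zpow (l : List (Fin k × Bool)) :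
    ∃ e : ℤ, (l.map (letterValue PresentedGroup.of)).prod
      = ((reduce (l.map Prod.fst)).map PresentedGroup.of).prod * z ^ e := by
  induction l with
  | nil => exact ⟨0, by simp⟩
  | cons p l ih =>
    obtain ⟨e, he⟩ := ih
    obtain ⟨e₁, he₁⟩ := letterValue_eq_of_mul_zpow i₀ p
    set P := ((reduce (l.map Prod.fst)).map PresentedGroup.of).prod
    obtain ⟨e₂, he₂⟩ := of_mul_prod_eq_mul_zpow i₀ p.1 (reduce (l.map Prod.fst))
    refine ⟨e₂ + e₁ + e, ?_⟩
    rw [List.map_cons, List.prod_cons, he, he₁, List.map_cons, reduce_cons]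
    calc PresentedGroup.of p.1 * z ^ e₁ * (P * z ^ e)
        = PresentedGroup.of p.1 * P * (z ^ e₁ * z ^ e) := by
          rw [mul_assoc, ← mul_assoc (z ^ e₁), ((commute_of_pow i₀ 2 _).zpow_left e₁).eq]
          simp only [mul_assoc]
      _ = _ := by rw [he₂, zpow_add, zpow_add, mul_assoc, mul_assoc]

theorem prod_letterValue_eq_one_iff (l : List (Fin k × Bool)) :
    (l.map (letterValue PresentedGroup.of)).prod = (1 : Γ) ↔
      reduce (l.map Prod.fst) = [] ∧ (l.map fun p => boolSign p.2).sum = 0 := by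
  constructor
  · intro h
    refine ⟨?_, ?_⟩
    · have := reductionHom_prod i₀ l ⟨[], List.isChain_nil⟩
      rw [h, map_one] at this
      exact this.symm
    · have := degreeHom_prod i₀ l
      rw [h, map_one] at this
      exact ofAdd_eq_one.mp this.symm
  · rintro ⟨hred, hsum⟩
    obtain ⟨e, he⟩ := exists_prod_eq_mul_zpow i₀ l
    rw [hred, List.map_nil, List.prod_nil, one_mul] at he
    have hdeg := degreeHom_prod i₀ l
    rw [hsum, he, map_zpow, map_pow, degreeHom_of, ← ofAdd_nsmul, ← ofAdd_zsmul,
      ofAdd_zero] at hdeg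
    have he0 : e = 0 := by simpa using ofAdd_eq_one.mp hdeg
    rw [he, he0, zpow_zero]

lemma wordValue_eq_one_iff {N : ℕ} (w : Fin N → Fin k × Bool) :
    wordValue (PresentedGroup.of (rels := Grels (fun _ : Fin k => 2) i₀)) w = 1 ↔
      reduce (List.ofFn fun j => (w j).1) = [] ∧ ∑ j, boolSign (w j).2 = 0 := by
  rw [wordValue_eq_prod, prod_letterValue_eq_one_iff, List.map_ofFn, List.map_ofFn,
    List.sum_ofFn]
  rfl

lemma cogrowthCount_eq_mul (N : ℕ) :
    cogrowthCount (PresentedGroup.of (rels := Grels (fun _ : Fin k => 2) i₀)) N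
      = Fintype.card {u : Fin N → Fin k // reduce (List.ofFn u) = []}
        * Fintype.card {b : Fin N → Bool // ∑ j, boolSign (b j) = 0} := by
  rw [cogrowthCount, ← Nat.card_eq_fintype_card, ← Nat.card_eq_fintype_card, ← Nat.card_prod]
  exact Nat.card_congr <| (Equiv.subtypeEquivRight (wordValue_eq_one_iff i₀)).trans <|
    (Equiv.subtypeEquiv (Equiv.arrowProdEquivProdArrow _ (fun _ => Fin k) fun _ => Bool)
      fun _ => Iff.rfl).trans
      (Equiv.subtypeProdEquivProd (p := fun u => reduce (List.ofFn u) = [])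
        (q := fun b => ∑ j, boolSign (b j) = 0))

end PresentedGroup

end Cogrowth

theorem cogrowth_G2k_general (k : ℕ) (hk : 3 ≤ k) (n : ℕ) :
    n * cogrowthCount (fun i => (PresentedGroup.of i :
          PresentedGroup (Grels (fun _ : Fin k => 2) (fin0 (Nat.le_of_succ_le hk))))) (2*n)
      = k * Nat.choose (2*n) n *
          ∑ m ∈ Finset.range n, (n - m) * Nat.choose (2*n) m * (k-1)^m := by
  obtain ⟨q, rfl⟩ : ∃ q, k = q + 1 := ⟨k - 1, by omega⟩
  have hwalks : n * Cogrowth.treeWalks (q + 1) (2 * n) 0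
      = (q + 1) * ∑ m ∈ range n, (n - m) * (2 * n).choose m * q ^ m := by
    have hclosed := Cogrowth.treeWalks_add_mul_binomPartialSum q (h := 0) (M := n) (zero_add _).symm
    have hbinom := Cogrowth.mul_binomPartialSum_two_mul_succ q n
    linear_combination n * hclosed + hbinom
  rw [Cogrowth.cogrowthCount_eq_mul, Cogrowth.card_reduce_ofFn_eq _ List.isChain_nil,
    Fintype.card_fin, Cogrowth.card_sum_boolSign_eq_zero, List.length_nil, add_tsub_cancel_right]
  linear_combination (2 * n).choose n * hwalks

/-- Exact cogrowth counts for `G(2,…,2) = ⟨a_1,…,a_k ∣ a_1² = ⋯ = a_k²⟩`, `k ≥ 3`: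
`n·ψ(2n) = k·C(2n,n)·Σ_{m=0}^{n-1} (n-m)·C(2n,m)·(k-1)^m` for `n ≥ 1`. -/
theorem cogrowth_G2k (k : ℕ) (hk : 3 ≤ k) (n : ℕ) (hn : 1 ≤ n) :
    n * cogrowthCount (fun i => (PresentedGroup.of i :
          PresentedGroup (Grels (fun _ : Fin k => 2) (fin0 (Nat.le_of_succ_le hk))))) (2*n)
      = k * Nat.choose (2*n) n *
          ∑ m ∈ Finset.range n, (n - m) * Nat.choose (2*n) m * (k-1)^m :=
  cogrowth_G2k_general k hk n
end

section
/- Let k ≥ 2 and p_1,…,p_k ≥ 2 be integers and fix a real number q > 0. Then the sequence n ↦ (Σ_{m=−2n}^{2n} f(2n, m) · q^m)^{1/(2n)} converges to a finite limit as n → ∞. -/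
/-- `fcount p i₀ n m` is the number of words of length `n` in the generators of
`G(p_1,…,p_k)` and their inverses whose value equals `Δ^m`, where `Δ = a_{i₀}^{p i₀}`. -/
noncomputable def fcount {k : ℕ} (p : Fin k → ℕ) (i₀ : Fin k) (n : ℕ) (m : ℤ) : ℕ :=
  Nat.card {w : Fin n → Fin k × Bool //
    wordValue (fun i => (PresentedGroup.of i : PresentedGroup (Grels p i₀))) w
      = ((PresentedGroup.of i₀ : PresentedGroup (Grels p i₀)) ^ (p i₀)) ^ m}

/-!
Write `S(N) = Σ_{|m| ≤ N} f(N, m) q^m`. The homomorphism `a_i ↦ 1/p_i` to `ℚ` sends `Δ`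
to `1`, so `Δ` has infinite order and a word determines the exponent `m` of its value `Δ^m`.
Hence concatenation embeds the pairs of words counted by `S(a) S(b)` into those counted by
`S(a + b)`, i.e. `S` is supermultiplicative. Since moreover `1 ≤ S(2n) ≤ (2k max(q, 1/q))^{2n}`,
Fekete's lemma applied to `-log S(2n)` makes `log S(2n) / (2n)` converge.
-/

open Finset Filter Topology Real

section WordCounting

variable {G : Type*} [Group G] {k : ℕ} (g : Fin k → G) (Δ : G)

lemma wordValue_eq_prod_map_ofFn {n : ℕ} (w : Fin n → Fin k × Bool) :
    wordValue g w = ((List.ofFn w).map fun x => if x.2 then g x.1 else (g x.1)⁻¹).prod := by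
  rw [wordValue, List.ofFn_eq_map, List.map_map]
  rfl

lemma wordValue_append {m n : ℕ} (u : Fin m → Fin k × Bool) (v : Fin n → Fin k × Bool) :
    wordValue g (Fin.append u v) = wordValue g u * wordValue g v := by
  simp only [wordValue_eq_prod_map_ofFn, List.ofFn_fin_append, List.map_append, List.prod_append]

noncomputable def weightedPowerCount (q : ℝ) (N : ℕ) : ℝ :=
  ∑ m ∈ Icc (-(N : ℤ)) N,
    (Nat.card {w : Fin N → Fin k × Bool // wordValue g w = Δ ^ m} : ℝ) * q ^ m

open Classical in
noncomputable def powerWords (N : ℕ) : Finset ((_ : ℤ) × (Fin N → Fin k × Bool)) :=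
  (Icc (-(N : ℤ)) N).sigma fun m => {w | wordValue g w = Δ ^ m}

lemma weightedPowerCount_eq_sum_powerWords (q : ℝ) (N : ℕ) :
    weightedPowerCount g Δ q N = ∑ x ∈ powerWords g Δ N, q ^ x.1 := by
  classical
  rw [powerWords, sum_sigma, weightedPowerCount]
  refine sum_congr rfl fun m _ => ?_
  simp only [sum_const, nsmul_eq_mul, Nat.card_eq_fintype_card, Fintype.card_subtype]

variable {g Δ}

lemma mem_powerWords {N : ℕ} {x : (_ : ℤ) × (Fin N → Fin k × Bool)} :
    x ∈ powerWords g Δ N ↔ |x.1| ≤ N ∧ wordValue g x.2 = Δ ^ x.1 := by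
  simp [powerWords, abs_le]

lemma injOn_snd_powerWords (hΔ : Function.Injective fun m : ℤ => Δ ^ m) (N : ℕ) :
    Set.InjOn Sigma.snd (powerWords g Δ N : Set ((_ : ℤ) × (Fin N → Fin k × Bool))) := by
  rintro ⟨m, w⟩ hm ⟨m', w'⟩ hm' (rfl : w = w')
  rw [mem_coe, mem_powerWords] at hm hm'
  obtain rfl : m = m' := hΔ (hm.2.symm.trans hm'.2)
  rfl

lemma weightedPowerCount_mul_le (hΔ : Function.Injective fun m : ℤ => Δ ^ m) {q : ℝ}
    (hq : 0 < q) (a b : ℕ) :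
    weightedPowerCount g Δ q a * weightedPowerCount g Δ q b ≤
      weightedPowerCount g Δ q (a + b) := by
  classical
  let concat
      (x : ((_ : ℤ) × (Fin a → Fin k × Bool)) × ((_ : ℤ) × (Fin b → Fin k × Bool))) :
      (_ : ℤ) × (Fin (a + b) → Fin k × Bool) :=
    ⟨x.1.1 + x.2.1, Fin.append x.1.2 x.2.2⟩
  have hmaps :
      (powerWords g Δ a ×ˢ powerWords g Δ b).image concat ⊆ powerWords g Δ (a + b) := by
    simp only [image_subset_iff, mem_product, and_imp, Prod.forall, mem_powerWords]
    intro x y hxa hx hyb hy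
    refine ⟨(abs_add_le _ _).trans (by push_cast; linarith), ?_⟩
    rw [wordValue_append, hx, hy, zpow_add]
  have hinj : Set.InjOn concat ↑(powerWords g Δ a ×ˢ powerWords g Δ b) := by
    rintro ⟨x, y⟩ hxy ⟨x', y'⟩ hxy' h
    rw [mem_coe, mem_product] at hxy hxy'
    have happend : Fin.appendEquiv a b (x.2, y.2) = Fin.appendEquiv a b (x'.2, y'.2) :=
      congrArg Sigma.snd h
    obtain ⟨hx, hy⟩ := Prod.ext_iff.mp ((Fin.appendEquiv a b).injective happend)
    exact Prod.ext (injOn_snd_powerWords hΔ a hxy.1 hxy'.1 hx)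
      (injOn_snd_powerWords hΔ b hxy.2 hxy'.2 hy)
  simp only [weightedPowerCount_eq_sum_powerWords, sum_mul_sum, ← sum_product']
  calc ∑ x ∈ powerWords g Δ a ×ˢ powerWords g Δ b, q ^ x.1.1 * q ^ x.2.1
      = ∑ y ∈ (powerWords g Δ a ×ˢ powerWords g Δ b).image concat, q ^ y.1 := by
        rw [sum_image hinj]
        exact sum_congr rfl fun x _ => (zpow_add₀ hq.ne' _ _).symm
    _ ≤ ∑ y ∈ powerWords g Δ (a + b), q ^ y.1 :=
        sum_le_sum_of_subset_of_nonneg hmaps fun y _ _ => (zpow_pos hq _).le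

lemma one_le_weightedPowerCount {q : ℝ} (hq : 0 < q) {N : ℕ} (w : Fin N → Fin k × Bool)
    (hw : wordValue g w = 1) : 1 ≤ weightedPowerCount g Δ q N := by
  have hmem : (⟨0, w⟩ : (_ : ℤ) × (Fin N → Fin k × Bool)) ∈ powerWords g Δ N :=
    mem_powerWords.2 ⟨by simp, by rw [hw, zpow_zero]⟩
  rw [weightedPowerCount_eq_sum_powerWords]
  calc (1 : ℝ) = q ^ (0 : ℤ) := (zpow_zero q).symm
    _ ≤ _ := single_le_sum (f := fun x => q ^ x.1) (fun x _ => (zpow_pos hq _).le) hmem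

lemma one_le_weightedPowerCount_two_mul (hΔ : Function.Injective fun m : ℤ => Δ ^ m) {q : ℝ}
    (hq : 0 < q) (i : Fin k) (n : ℕ) : 1 ≤ weightedPowerCount g Δ q (2 * n) := by
  induction n with
  | zero => exact one_le_weightedPowerCount hq Fin.elim0 (by simp [wordValue])
  | succ n ih =>
    have h2 : 1 ≤ weightedPowerCount g Δ q 2 :=
      one_le_weightedPowerCount hq ![(i, true), (i, false)]
        (by simp [wordValue, List.finRange_succ])
    calc 1 ≤ weightedPowerCount g Δ q (2 * n) * weightedPowerCount g Δ q 2 :=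
          one_le_mul_of_one_le_of_one_le ih h2
      _ ≤ weightedPowerCount g Δ q (2 * (n + 1)) := weightedPowerCount_mul_le hΔ hq _ _

lemma zpow_le_max_inv_pow {q : ℝ} (hq : 0 < q) {m : ℤ} {N : ℕ} (hm : |m| ≤ N) :
    q ^ m ≤ max q q⁻¹ ^ N := by
  obtain ⟨hlo, hhi⟩ := abs_le.mp hm
  rcases le_total 1 q with h | h
  · calc q ^ m ≤ q ^ (N : ℤ) := zpow_le_zpow_right₀ h hhi
      _ = q ^ N := zpow_natCast q N
      _ ≤ _ := pow_le_pow_left₀ hq.le (le_max_left _ _) N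
  · calc q ^ m ≤ q ^ (-(N : ℤ)) := zpow_le_zpow_right_of_le_one₀ hq h hlo
      _ = q⁻¹ ^ N := by rw [zpow_neg, zpow_natCast, inv_pow]
      _ ≤ _ := pow_le_pow_left₀ (inv_nonneg.2 hq.le) (le_max_right _ _) N

lemma weightedPowerCount_le_pow (hΔ : Function.Injective fun m : ℤ => Δ ^ m) {q : ℝ}
    (hq : 0 < q) (N : ℕ) : weightedPowerCount g Δ q N ≤ (2 * k * max q q⁻¹) ^ N := by
  have hcard : #(powerWords g Δ N) ≤ (2 * k) ^ N :=
    calc #(powerWords g Δ N) ≤ #(univ : Finset (Fin N → Fin k × Bool)) :=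
          card_le_card_of_injOn Sigma.snd (fun _ _ => mem_coe.2 (mem_univ _))
            (injOn_snd_powerWords hΔ N)
      _ = (2 * k) ^ N := by simp [mul_comm]
  rw [weightedPowerCount_eq_sum_powerWords]
  calc ∑ x ∈ powerWords g Δ N, q ^ x.1 ≤ ∑ x ∈ powerWords g Δ N, max q q⁻¹ ^ N :=
        sum_le_sum fun x hx => zpow_le_max_inv_pow hq (mem_powerWords.1 hx).1
    _ = #(powerWords g Δ N) * max q q⁻¹ ^ N := by rw [sum_const, nsmul_eq_mul]
    _ ≤ (2 * k) ^ N * max q q⁻¹ ^ N := by gcongr; exact_mod_cast hcard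
    _ = (2 * k * max q q⁻¹) ^ N := (mul_pow _ _ _).symm

end WordCounting

lemma exists_tendsto_log_div_of_supermultiplicative {a : ℕ → ℝ} {C : ℝ}
    (ha : ∀ n, 0 < a n) (hmul : ∀ m n, a m * a n ≤ a (m + n)) (hC : ∀ n, a n ≤ C ^ n) :
    ∃ ℓ, Tendsto (fun n => log (a n) / n) atTop (𝓝 ℓ) := by
  have hsub : Subadditive fun n => -log (a n) := fun m n => by
    have h := log_le_log (mul_pos (ha m) (ha n)) (hmul m n)
    rw [log_mul (ha m).ne' (ha n).ne'] at h
    dsimp only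
    linarith
  have hbdd : BddBelow (Set.range fun n => -log (a n) / n) := by
    refine ⟨-|log C|, ?_⟩
    rintro _ ⟨n, rfl⟩
    rcases eq_or_ne n 0 with rfl | hn
    · simp
    · have hlog : log (a n) ≤ n * log C := by
        rw [← log_pow]
        exact log_le_log (ha n) (hC n)
      rw [le_div_iff₀ (by positivity)]
      linarith [mul_le_mul_of_nonneg_left (le_abs_self (log C)) (Nat.cast_nonneg (α := ℝ) n)]
  refine ⟨-hsub.lim, ((hsub.tendsto_lim hbdd).neg).congr fun n => ?_⟩
  simp only [neg_div, neg_neg]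

lemma injective_zpow_pow_of_Grels {k : ℕ} {p : Fin k → ℕ} (hp : ∀ i, p i ≠ 0)
    (i₀ : Fin k) :
    Function.Injective fun m : ℤ =>
      ((PresentedGroup.of i₀ : PresentedGroup (Grels p i₀)) ^ p i₀) ^ m := by
  have hrel : ∀ i, p i • (p i : ℚ)⁻¹ = 1 := fun i => by
    rw [nsmul_eq_mul, mul_inv_cancel₀ (Nat.cast_ne_zero.2 (hp i))]
  let φ : PresentedGroup (Grels p i₀) →* Multiplicative ℚ :=
    PresentedGroup.toGroup (f := fun i => .ofAdd (p i : ℚ)⁻¹) <| by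
      rintro _ ⟨i, rfl⟩
      simp only [map_mul, map_inv, map_pow, FreeGroup.lift_apply_of, ← ofAdd_nsmul, hrel,
        mul_inv_cancel]
  have hφ : ∀ m : ℤ, (φ ((PresentedGroup.of i₀ ^ p i₀) ^ m)).toAdd = m := fun m => by
    simp [φ, PresentedGroup.toGroup.of, ← ofAdd_nsmul, hrel]
  intro m m' h
  exact_mod_cast (hφ m).symm.trans ((congrArg (fun x => (φ x).toAdd) h).trans (hφ m'))

open Filter in
/-- For every fixed real `q > 0`, the sequence
`(Σ_{m=-2n}^{2n} f(2n,m)·q^m)^{1/(2n)}` converges to a finite limit. -/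
theorem growth_rate_exists (k : ℕ) (hk : 2 ≤ k) (p : Fin k → ℕ)
    (hp : ∀ i, 2 ≤ p i) (q : ℝ) (hq : 0 < q) :
    ∃ L : ℝ, Tendsto (fun n : ℕ =>
        (∑ m ∈ Finset.Icc (-(2 * (n : ℤ))) (2 * (n : ℤ)),
            (fcount p (fin0 hk) (2*n) m : ℝ) * q ^ m)
          ^ (1 / (2 * (n : ℝ))))
      atTop (nhds L) := by
  set i₀ := fin0 hk
  have hΔ := injective_zpow_pow_of_Grels (fun i => (two_pos.trans_le (hp i)).ne') i₀
  set W := weightedPowerCount (fun i => (PresentedGroup.of i : PresentedGroup (Grels p i₀)))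
    ((PresentedGroup.of i₀ : PresentedGroup (Grels p i₀)) ^ p i₀) q
  have hpos (n : ℕ) : 0 < W (2 * n) :=
    one_pos.trans_le (one_le_weightedPowerCount_two_mul hΔ hq i₀ n)
  obtain ⟨ℓ, hℓ⟩ := exists_tendsto_log_div_of_supermultiplicative hpos
    (fun m n => by rw [mul_add]; exact weightedPowerCount_mul_le hΔ hq _ _)
    (fun n => by rw [← pow_mul]; exact weightedPowerCount_le_pow hΔ hq _)
  refine ⟨exp (ℓ / 2), ((continuous_exp.tendsto _).comp (hℓ.div_const 2)).congr fun n => ?_⟩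
  have hW : W (2 * n) = ∑ m ∈ Finset.Icc (-(2 * (n : ℤ))) (2 * (n : ℤ)),
      (fcount p i₀ (2 * n) m : ℝ) * q ^ m := by
    simp only [W, weightedPowerCount, fcount, Nat.cast_mul, Nat.cast_ofNat]
  rw [Function.comp_apply, ← hW, rpow_def_of_pos (hpos n)]
  congr 1
  ring
end
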